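/- Telescoping identity and correctness of refitting for deterministic-transition models (deterministic core of the refitting lemma for PLHR.D): Let S be a finite set partitioned into layers S_1, …, S_H and A a finite action set. Let (P, r) and (P̂, R̂) be two deterministic-transition models: P, P̂ : S_h × A → S_{h+1} for each h < H, and r, R̂ : S × A → ℝ. For a map π : S → A define V^π by V^π(s) := r(s, π(s)) for s ∈ S_H and V^π(s) := r(s, π(s)) + V^π(P(s, π(s))) otherwise; define V̂^π analogously using (P̂, R̂). Fix h ∈ {1, …, H} and s_h ∈ S_h, and let s̄_h := s_h and s̄_{k+1} := P̂(s̄_k, π(s̄_k)) for h ≤ k < H be the trajectory of π in the estimated model, with the convention V^π(s̄_{H+1}) := 0. Then: (i) V^π(s_h) − V̂^π(s_h) = Σ_{k=h}^{H} [V^π(s̄_k) − R̂(s̄_k, π(s̄_k)) − V^π(s̄_{k+1})]; consequently, if |V^π(s_h) − V̂^π(s_h)| > (H − h + 1)·γ for some γ > 0, then some k ∈ {h, …, H} satisfies |V^π(s̄_k) − R̂(s̄_k, π(s̄_k)) − V^π(s̄_{k+1})| > γ. (ii) If moreover |R̂(s, a) − r(s, a)| ≤ γ' for all (s, a) with γ'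 < γ, then every k < H with |V^π(s̄_k) − R̂(s̄_k, π(s̄_k)) − V^π(P̂(s̄_k, π(s̄_k)))| > γ satisfies P̂(s̄_k, π(s̄_k)) ≠ P(s̄_k, π(s̄_k)); in particular, under the hypotheses of both parts there exists k < H at which the estimated transition differs from the true transition. -/
import Mathlib


/-- Value function of a deterministic-transition model `(P, r)` under policy `π`,
with `n` remaining steps. -/
noncomputable def detVsteps {S A : Type} (P : S → A → S) (r : S → A → ℝ)
    (π : S → A) : ℕ → S → ℝ
  | 0, _ => 0
  | n + 1, s => r s (π s) + detVsteps P r π n (P s (π s))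

/-- Value `V^π(s)` of policy `π` from state `s` in a layered deterministic-transition
model with horizon `H`. -/
noncomputable def detV {S A : Type} (H : ℕ) (layer : S → ℕ) (P : S → A → S)
    (r : S → A → ℝ) (π : S → A) (s : S) : ℝ :=
  detVsteps P r π (H + 1 - layer s) s

private lemma tel_aux (f : ℕ → ℝ) : ∀ b a, a ≤ b →
    ∑ k ∈ Finset.Icc a b, (f k - f (k + 1)) = f a - f (b + 1) := by
  intro b
  induction b with
  | zero => intro a ha; interval_cases a; simp
  | succ b ih =>
    intro a ha
    rcases Nat.lt_or_ge b a with h' | h'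
    · have : a = b + 1 := by omega
      subst this; simp
    · rw [Finset.sum_Icc_succ_top (by omega), ih a h']; ring

private lemma detV_step {S A : Type} (H : ℕ) (layer : S → ℕ)
    (P' : S → A → S) (r' : S → A → ℝ) (π : S → A)
    (hP' : ∀ s a, layer s < H → layer (P' s a) = layer s + 1)
    (s : S) (hs : layer s < H) :
    detV H layer P' r' π s = r' s (π s) + detV H layer P' r' π (P' s (π s)) := by
  unfold detV
  rw [hP' s (π s) hs]
  have e1 : H + 1 - layer s = (H - layer s) + 1 := by omega
  have e2 : H + 1 - (layer s + 1) = H - layer s := by omega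
  rw [e1, e2, detVsteps]

private lemma detV_end {S A : Type} (H : ℕ) (layer : S → ℕ)
    (P' : S → A → S) (r' : S → A → ℝ) (π : S → A)
    (s : S) (hs : layer s = H) :
    detV H layer P' r' π s = r' s (π s) := by
  unfold detV
  rw [hs]
  have e1 : H + 1 - H = 1 := by omega
  rw [e1]
  simp [detVsteps]

/-- Telescoping identity and correctness of refitting for
deterministic-transition models (deterministic core of the refitting lemma for
`PLHR.D`).  Here `(P, r)` is the true model, `(P̂, R̂)` the estimated one, and
`s̄` is the trajectory of `π` from `s_h` in the estimated model. -/
theorem refit_telescoping_and_correctness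
    {S A : Type} [Fintype S] [Fintype A] (H : ℕ)
    (layer : S → ℕ) (hlb : ∀ s, 1 ≤ layer s) (hub : ∀ s, layer s ≤ H)
    (P Phat : S → A → S) (r Rhat : S → A → ℝ)
    (hP : ∀ s a, layer s < H → layer (P s a) = layer s + 1)
    (hPhat : ∀ s a, layer s < H → layer (Phat s a) = layer s + 1)
    (π : S → A)
    (h : ℕ) (h1 : 1 ≤ h) (hH : h ≤ H) (sh : S) (hsh : layer sh = h)
    (sbar : ℕ → S) (hsbar0 : sbar h = sh)
    (hsbar : ∀ k, h ≤ k → sbar (k + 1) = Phat (sbar k) (π (sbar k))) :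
    -- (i) telescoping identity, with the convention V^π(s̄_{H+1}) := 0
    (detV H layer P r π sh - detV H layer Phat Rhat π sh =
      ∑ k ∈ Finset.Icc h H,
        (detV H layer P r π (sbar k) - Rhat (sbar k) (π (sbar k)) -
          if k < H then detV H layer P r π (sbar (k + 1)) else 0)) ∧
    -- consequently a large value gap exposes a large one-step defect
    (∀ γ : ℝ, 0 < γ →
      ((H : ℝ) - (h : ℝ) + 1) * γ <
          |detV H layer P r π sh - detV H layer Phat Rhat π sh| →
      ∃ k, h ≤ k ∧ k ≤ H ∧
        γ < |detV H layer P r π (sbar k) - Rhat (sbar k) (π (sbar k)) -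
          if k < H then detV H layer P r π (sbar (k + 1)) else 0|) ∧
    -- (ii) under accurate rewards, a large one-step defect exposes a wrong transition,
    -- and under the hypotheses of both parts some estimated transition is wrong
    (∀ γ γ' : ℝ, (∀ s a, |Rhat s a - r s a| ≤ γ') → γ' < γ →
      (∀ k, h ≤ k → k < H →
        γ < |detV H layer P r π (sbar k) - Rhat (sbar k) (π (sbar k)) -
            detV H layer P r π (Phat (sbar k) (π (sbar k)))| →
        Phat (sbar k) (π (sbar k)) ≠ P (sbar k) (π (sbar k))) ∧
      (((H : ℝ) - (h : ℝ) + 1) * γ <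
          |detV H layer P r π sh - detV H layer Phat Rhat π sh| →
        ∃ k, h ≤ k ∧ k < H ∧
          Phat (sbar k) (π (sbar k)) ≠ P (sbar k) (π (sbar k)))) := by
  -- layers along the estimated trajectory
  have hlayer : ∀ k, h ≤ k → k ≤ H → layer (sbar k) = k := by
    intro k
    induction k with
    | zero => intro hk _; omega
    | succ n ih =>
      intro hk hkH
      rcases Nat.lt_or_ge n h with hn | hn
      · have hnh : n + 1 = h := by omega
        rw [hnh, hsbar0, hsh]
      · have hln : layer (sbar n) = n := ih hn (by omega)
        rw [hsbar n hn, hPhat _ _ (by omega), hln]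
  -- telescoping of the true values along the trajectory
  have htel1 : ∑ k ∈ Finset.Icc h H,
      (detV H layer P r π (sbar k) -
        if k < H then detV H layer P r π (sbar (k + 1)) else 0) =
      detV H layer P r π sh := by
    set f : ℕ → ℝ := fun k => if k ≤ H then detV H layer P r π (sbar k) else 0 with hf
    have hconv : ∀ k ∈ Finset.Icc h H,
        detV H layer P r π (sbar k) -
          (if k < H then detV H layer P r π (sbar (k + 1)) else 0) =
        f k - f (k + 1) := by
      intro k hk
      simp only [Finset.mem_Icc] at hk
      by_cases hkH : k < H
      · simp [hf, hkH, hk.2, Nat.succ_le_of_lt hkH]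
      · have hkeq : k = H := by omega
        subst hkeq
        simp [hf]
    rw [Finset.sum_congr rfl hconv, tel_aux f H h hH]
    simp [hf, hH, hsbar0]
  -- the estimated value is the sum of estimated rewards along the trajectory
  have hVhatSum : ∀ n k, h ≤ k → k + n = H →
      detV H layer Phat Rhat π (sbar k) =
        ∑ j ∈ Finset.Icc k H, Rhat (sbar j) (π (sbar j)) := by
    intro n
    induction n with
    | zero =>
      intro k hk hkH
      have hk' : H = k := by omega
      subst hk'
      rw [detV_end H layer Phat Rhat π _ (hlayer H hk le_rfl)]
      simp
    | succ n ih =>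
      intro k hk hkH
      have hkH' : k < H := by omega
      rw [detV_step H layer Phat Rhat π hPhat _ (by rw [hlayer k hk (by omega)]; omega),
        ← hsbar k hk, ih (k + 1) (by omega) (by omega)]
      have : Finset.Icc k H = insert k (Finset.Icc (k + 1) H) := by
        rw [Finset.Icc_add_one_left_eq_Ioc, Finset.Ioc_insert_left (by omega)]
      rw [this, Finset.sum_insert (by simp)]
  -- Part (i): telescoping identity
  have part1 : detV H layer P r π sh - detV H layer Phat Rhat π sh =
      ∑ k ∈ Finset.Icc h H,
        (detV H layer P r π (sbar k) - Rhat (sbar k) (π (sbar k)) -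
          if k < H then detV H layer P r π (sbar (k + 1)) else 0) := by
    have hsplit : ∀ k ∈ Finset.Icc h H,
        detV H layer P r π (sbar k) - Rhat (sbar k) (π (sbar k)) -
          (if k < H then detV H layer P r π (sbar (k + 1)) else 0) =
        (detV H layer P r π (sbar k) -
          (if k < H then detV H layer P r π (sbar (k + 1)) else 0)) -
          Rhat (sbar k) (π (sbar k)) := by
      intro k _; ring
    rw [Finset.sum_congr rfl hsplit, Finset.sum_sub_distrib, htel1,
      ← hVhatSum (H - h) h le_rfl (by omega), hsbar0]
  -- cardinality conversion
  have hcard : ((H : ℝ) - (h : ℝ) + 1) = ((Finset.Icc h H).card : ℝ) := by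
    rw [Nat.card_Icc]
    push_cast [Nat.cast_sub (by omega : h ≤ H + 1)]
    ring
  -- Part (i), consequence
  have part2 : ∀ γ : ℝ, 0 < γ →
      ((H : ℝ) - (h : ℝ) + 1) * γ <
          |detV H layer P r π sh - detV H layer Phat Rhat π sh| →
      ∃ k, h ≤ k ∧ k ≤ H ∧
        γ < |detV H layer P r π (sbar k) - Rhat (sbar k) (π (sbar k)) -
          if k < H then detV H layer P r π (sbar (k + 1)) else 0| := by
    intro γ hγ hgap
    by_contra hcon
    push_neg at hcon
    have hb : |detV H layer P r π sh - detV H layer Phat Rhat π sh| ≤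
        ((H : ℝ) - (h : ℝ) + 1) * γ := by
      rw [part1, hcard]
      calc |∑ k ∈ Finset.Icc h H,
          (detV H layer P r π (sbar k) - Rhat (sbar k) (π (sbar k)) -
            if k < H then detV H layer P r π (sbar (k + 1)) else 0)| ≤
          ∑ k ∈ Finset.Icc h H,
            |detV H layer P r π (sbar k) - Rhat (sbar k) (π (sbar k)) -
              if k < H then detV H layer P r π (sbar (k + 1)) else 0| :=
            Finset.abs_sum_le_sum_abs _ _
        _ ≤ ∑ _k ∈ Finset.Icc h H, γ := by
            apply Finset.sum_le_sum
            intro k hk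
            simp only [Finset.mem_Icc] at hk
            exact hcon k hk.1 hk.2
        _ = ((Finset.Icc h H).card : ℝ) * γ := by
            rw [Finset.sum_const, nsmul_eq_mul]
    linarith
  refine ⟨part1, part2, ?_⟩
  intro γ γ' hrew hγ'
  have part3 : ∀ k, h ≤ k → k < H →
      γ < |detV H layer P r π (sbar k) - Rhat (sbar k) (π (sbar k)) -
          detV H layer P r π (Phat (sbar k) (π (sbar k)))| →
      Phat (sbar k) (π (sbar k)) ≠ P (sbar k) (π (sbar k)) := by
    intro k hk hkH hgap heq
    rw [heq, detV_step H layer P r π hP _ (by rw [hlayer k hk (by omega)]; omega)] at hgap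
    have h0 : |r (sbar k) (π (sbar k)) - Rhat (sbar k) (π (sbar k))| ≤ γ' := by
      rw [abs_sub_comm]; exact hrew _ _
    have hgap' : γ < |r (sbar k) (π (sbar k)) - Rhat (sbar k) (π (sbar k))| := by
      convert hgap using 2; ring
    linarith
  refine ⟨part3, ?_⟩
  intro hgap
  have hγpos : 0 < γ := by
    have := abs_nonneg (Rhat sh (π sh) - r sh (π sh))
    linarith [hrew sh (π sh)]
  obtain ⟨k, hk1, hk2, hk3⟩ := part2 γ hγpos hgap
  by_cases hkH : k < H
  · refine ⟨k, hk1, hkH, ?_⟩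
    apply part3 k hk1 hkH
    rw [← hsbar k hk1]
    simpa [hkH] using hk3
  · exfalso
    have hkeq : H = k := by omega
    subst hkeq
    rw [if_neg hkH, detV_end H layer P r π _ (hlayer H hk1 le_rfl)] at hk3
    have := hrew (sbar H) (π (sbar H))
    rw [abs_sub_comm] at this
    simp only [sub_zero] at hk3
    linarith
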